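/- Let Ω = {z ∈ ℂ : 1/4 < |z| < 1/2}. Then λ̃(z) = 1/(2√|z| (1-|z|)) is a C² positive function on Ω satisfying Δ(log λ̃) = 4 λ̃² (i.e., the conformal metric λ̃(z)|dz| has constant curvature -4), with boundary values λ̃(ξ) = 4/3 for |ξ| = 1/4 and λ̃(ξ) = √2 for |ξ| = 1/2. Moreover, on the slit annulus D = Ω \ (-1/2, -1/4), one has λ̃(z) = |g'(z)|/(1-|g(z)|²) where g is a holomorphic branch of √z mapping D into 𝔻. -/

import Mathlib

/-!
`λ̃` is the pullback of the hyperbolic density `1/(1-|w|²)` of curvature `-4` under `w = √z`: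
if `g² = z` then `g' = 1/(2g)`, so `|g'|/(1-|g|²) = 1/(2√|z|(1-|z|))`. Since the branch `g` only
lives on the slit annulus, the curvature is instead checked on all of `Ω` with the Laplacian of a
radial function, `Δψ(|z|) = ψ''(r) + ψ'(r)/r`: for `ψ = log λ̃ = -log 2 - ½ log r - log(1-r)`
this is `1/(r(1-r)²) = 4λ̃²`.
-/

open Complex

/-- Euclidean Laplacian of a real-valued function on `ℂ`. -/
noncomputable def lap (u : ℂ → ℝ) (z : ℂ) : ℝ :=
  fderiv ℝ (fun w => fderiv ℝ u w 1) z 1 + fderiv ℝ (fun w => fderiv ℝ u w Complex.I) z Complex.I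

open Filter Topology
open scoped RealInnerProductSpace

section RadialFunctions

variable {F : Type*} [NormedAddCommGroup F] [InnerProductSpace ℝ F]

theorem hasFDerivAt_norm_of_ne_zero {x : F} (hx : x ≠ 0) :
    HasFDerivAt (‖·‖) (‖x‖⁻¹ • innerSL ℝ x) x := by
  have hx2 : ‖x‖ ^ 2 ≠ 0 := by positivity
  convert (hasStrictFDerivAt_norm_sq x).hasFDerivAt.sqrt hx2 using 1
  · funext y; exact (Real.sqrt_sq (norm_nonneg y)).symm
  · ext v
    simp only [smul_apply, coe_innerSL_apply, smul_eq_mul, Real.sqrt_sq (norm_nonneg x),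
      nsmul_eq_mul, Nat.cast_ofNat]
    field_simp

theorem fderiv_fderiv_comp_norm_apply {ψ ψ' : ℝ → ℝ} {ψ'' : ℝ} {x : F} (hx : x ≠ 0)
    (hψ : ∀ᶠ r in 𝓝 ‖x‖, HasDerivAt ψ (ψ' r) r) (hψ' : HasDerivAt ψ' ψ'' ‖x‖) (v : F) :
    fderiv ℝ (fun y => fderiv ℝ (fun y => ψ ‖y‖) y v) x v =
      ψ' ‖x‖ / ‖x‖ * ‖v‖ ^ 2 + (ψ'' - ψ' ‖x‖ / ‖x‖) * (⟪x, v⟫ / ‖x‖) ^ 2 := by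
  have hgrad : (fun y => fderiv ℝ (fun y => ψ ‖y‖) y v) =ᶠ[𝓝 x]
      fun y => ψ' ‖y‖ / ‖y‖ * ⟪v, y⟫ := by
    filter_upwards [eventually_ne_nhds hx, (continuous_norm.tendsto x).eventually hψ]
      with y hy hψy
    have hψy' : HasFDerivAt (fun y => ψ ‖y‖) _ y :=
      hψy.comp_hasFDerivAt y (hasFDerivAt_norm_of_ne_zero hy)
    rw [hψy'.fderiv]
    simp only [smul_apply, coe_innerSL_apply, real_inner_comm, smul_eq_mul]
    ring
  have hχ : HasDerivAt (fun r => ψ' r / r) ((ψ'' * ‖x‖ - ψ' ‖x‖ * 1) / ‖x‖ ^ 2) ‖x‖ :=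
    hψ'.div (hasDerivAt_id _) (norm_ne_zero_iff.mpr hx)
  have hdiv : HasFDerivAt (fun y => ψ' ‖y‖ / ‖y‖ * ⟪v, y⟫) _ x :=
    (hχ.comp_hasFDerivAt x (hasFDerivAt_norm_of_ne_zero hx)).mul (innerSL ℝ v).hasFDerivAt
  rw [hgrad.fderiv_eq, hdiv.fderiv]
  have hx0 : ‖x‖ ≠ 0 := norm_ne_zero_iff.mpr hx
  simp only [Function.comp_apply, real_inner_comm, mul_one, add_apply, smul_apply,
    coe_innerSL_apply, real_inner_self_eq_norm_sq, smul_eq_mul]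
  field_simp

end RadialFunctions

theorem lap_comp_norm {ψ ψ' : ℝ → ℝ} {ψ'' : ℝ} {z : ℂ} (hz : z ≠ 0)
    (hψ : ∀ᶠ r in 𝓝 ‖z‖, HasDerivAt ψ (ψ' r) r) (hψ' : HasDerivAt ψ' ψ'' ‖z‖) :
    lap (fun w => ψ ‖w‖) z = ψ'' + ψ' ‖z‖ / ‖z‖ := by
  rw [lap, fderiv_fderiv_comp_norm_apply hz hψ hψ', fderiv_fderiv_comp_norm_apply hz hψ hψ']
  have hz0 : ‖z‖ ≠ 0 := norm_ne_zero_iff.mpr hz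
  have hre_im : z.re ^ 2 + z.im ^ 2 = ‖z‖ ^ 2 := by
    rw [Complex.sq_norm, Complex.normSq_apply]; ring
  simp only [norm_one, norm_I, Complex.inner, conj_re, conj_im, mul_re, one_mul,
    I_re, I_im, zero_mul, mul_neg, sub_neg_eq_add, zero_add]
  field_simp
  linear_combination (ψ'' * ‖z‖ - ψ' ‖z‖) * hre_im

/-- The density `|g'(z)| / (1 - |g(z)|²)` of the pullback of the hyperbolic metric of curvature
`-4` on the unit disc under `g(z) = √z`, as a function of `r = |z|`. -/
noncomputable def sqrtPullbackDensity (r : ℝ) : ℝ := 1 / (2 * √r * (1 - r))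

section SqrtPullbackDensity

variable {r : ℝ}

theorem sqrtPullbackDensity_pos (h0 : 0 < r) (h1 : r < 1) : 0 < sqrtPullbackDensity r := by
  have : 0 < 1 - r := by linarith
  unfold sqrtPullbackDensity
  positivity

theorem contDiffAt_sqrtPullbackDensity {n : WithTop ℕ∞} (h0 : 0 < r) (h1 : r ≠ 1) :
    ContDiffAt ℝ n sqrtPullbackDensity r := by
  have hden : 2 * √r * (1 - r) ≠ 0 := by
    have : 1 - r ≠ 0 := sub_ne_zero.mpr h1.symm
    positivity
  exact contDiffAt_const.div
    ((contDiffAt_const.mul (Real.contDiffAt_sqrt h0.ne')).mul (contDiffAt_const.sub contDiffAt_id))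
    hden

theorem log_sqrtPullbackDensity (h0 : 0 < r) (h1 : r ≠ 1) :
    Real.log (sqrtPullbackDensity r) = -(Real.log 2 + Real.log r / 2 + Real.log (1 - r)) := by
  have : 1 - r ≠ 0 := sub_ne_zero.mpr h1.symm
  rw [sqrtPullbackDensity, one_div, Real.log_inv, Real.log_mul (by positivity) this,
    Real.log_mul two_ne_zero (by positivity), Real.log_sqrt h0.le]

theorem hasDerivAt_log_sqrtPullbackDensity (h0 : 0 < r) (h1 : r ≠ 1) :
    HasDerivAt (fun r => Real.log (sqrtPullbackDensity r)) ((1 - r)⁻¹ - (2 * r)⁻¹) r := by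
  have h1' : 1 - r ≠ 0 := sub_ne_zero.mpr h1.symm
  have hlog : HasDerivAt (fun r => -(Real.log 2 + Real.log r / 2 + Real.log (1 - r)))
      ((1 - r)⁻¹ - (2 * r)⁻¹) r := by
    refine ((((Real.hasDerivAt_log h0.ne').div_const 2).const_add (Real.log 2)).add
      (((hasDerivAt_id' r).const_sub 1).log h1')).neg.congr_deriv ?_
    field_simp
    ring
  refine hlog.congr_of_eventuallyEq ?_
  filter_upwards [Ioi_mem_nhds h0, isOpen_ne.mem_nhds h1] with s hs0 hs1
  exact log_sqrtPullbackDensity hs0 hs1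

theorem lap_log_sqrtPullbackDensity_norm {z : ℂ} (hz0 : z ≠ 0) (hz1 : ‖z‖ ≠ 1) :
    lap (fun w => Real.log (sqrtPullbackDensity ‖w‖)) z = 4 * sqrtPullbackDensity ‖z‖ ^ 2 := by
  have h0 : 0 < ‖z‖ := norm_pos_iff.mpr hz0
  have h1 : 1 - ‖z‖ ≠ 0 := sub_ne_zero.mpr hz1.symm
  have hψ : ∀ᶠ r in 𝓝 ‖z‖, HasDerivAt (fun r => Real.log (sqrtPullbackDensity r))
      ((1 - r)⁻¹ - (2 * r)⁻¹) r := by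
    filter_upwards [Ioi_mem_nhds h0, isOpen_ne.mem_nhds hz1] with r hr0 hr1
    exact hasDerivAt_log_sqrtPullbackDensity hr0 hr1
  have hψ' : HasDerivAt (fun r => (1 - r)⁻¹ - (2 * r)⁻¹)
      (1 / (1 - ‖z‖) ^ 2 + 1 / (2 * ‖z‖ ^ 2)) ‖z‖ := by
    refine (((hasDerivAt_id' _).const_sub 1).inv h1).sub
      (((hasDerivAt_id' _).const_mul 2).inv (by positivity)) |>.congr_deriv ?_
    field_simp
    ring
  rw [lap_comp_norm hz0 hψ hψ', sqrtPullbackDensity, div_pow, mul_pow, mul_pow,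
    Real.sq_sqrt h0.le]
  field_simp
  ring

theorem sqrtPullbackDensity_one_fourth : sqrtPullbackDensity (1 / 4) = 4 / 3 := by
  rw [sqrtPullbackDensity, show (1 / 4 : ℝ) = (1 / 2) ^ 2 by norm_num, Real.sqrt_sq (by norm_num)]
  norm_num

theorem sqrtPullbackDensity_one_half : sqrtPullbackDensity (1 / 2) = √2 := by
  rw [sqrtPullbackDensity, show (2 : ℝ) * √(1 / 2) * (1 - 1 / 2) = √(1 / 2) by ring, one_div,
    ← Real.sqrt_inv, one_div, inv_inv]

end SqrtPullbackDensity

theorem sqrtPullbackDensity_norm_sq (w : ℂ) :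
    sqrtPullbackDensity ‖w ^ 2‖ = ‖(2 * w)⁻¹‖ / (1 - ‖w‖ ^ 2) := by
  rw [sqrtPullbackDensity, norm_pow, Real.sqrt_sq (norm_nonneg w), norm_inv, norm_mul,
    Complex.norm_two]
  field_simp

theorem cpow_inv_two_sq (z : ℂ) : (z ^ (2⁻¹ : ℂ)) ^ 2 = z := by
  exact_mod_cast cpow_nat_inv_pow z two_ne_zero

theorem hasDerivAt_cpow_inv_two {z : ℂ} (hz : z ∈ slitPlane) :
    HasDerivAt (fun z : ℂ => z ^ (2⁻¹ : ℂ)) (2 * z ^ (2⁻¹ : ℂ))⁻¹ z := by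
  refine (hasStrictDerivAt_cpow_const (c := 2⁻¹) hz).hasDerivAt.congr_deriv ?_
  rw [show (2⁻¹ : ℂ) - 1 = -2⁻¹ by norm_num, cpow_neg, mul_inv]

theorem mem_slitPlane_of_not_neg_real {z : ℂ} (h0 : z ≠ 0) (h : ¬(z.im = 0 ∧ z.re < 0)) :
    z ∈ slitPlane := by
  rw [mem_slitPlane_iff_not_le_zero, Complex.le_def]
  rintro ⟨hre, him⟩
  exact h0 (Complex.ext (le_antisymm hre (not_lt.mp fun hlt => h ⟨him, hlt⟩)) him)

/-- On the annulus `Ω = {1/4 < |z| < 1/2}`, the function `λ̃(z) = 1/(2√|z|(1-|z|))` is a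
positive C² conformal density of constant curvature `-4`, with boundary values `4/3` on
`|ξ| = 1/4` and `√2` on `|ξ| = 1/2`; and on the slit annulus `D = Ω ∖ (-1/2,-1/4)` one has
`λ̃ = |g'|/(1-|g|²)` for a holomorphic branch `g` of `√z` mapping `D` into `𝔻`. -/
theorem annulus_metric
    (Ω D : Set ℂ)
    (hΩ : Ω = {z : ℂ | 1/4 < ‖z‖ ∧ ‖z‖ < 1/2})
    (hD : D = Ω \ {z : ℂ | z.im = 0 ∧ z.re < 0})
    (lam : ℂ → ℝ)
    (hlam : ∀ z, lam z = 1 / (2 * Real.sqrt (‖z‖) * (1 - ‖z‖))) :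
    (∀ z ∈ Ω, 0 < lam z) ∧
    ContDiffOn ℝ 2 lam Ω ∧
    (∀ z ∈ Ω, lap (fun w => Real.log (lam w)) z = 4 * (lam z)^2) ∧
    (∀ ξ : ℂ, ‖ξ‖ = 1/4 → lam ξ = 4/3) ∧
    (∀ ξ : ℂ, ‖ξ‖ = 1/2 → lam ξ = Real.sqrt 2) ∧
    (∃ g : ℂ → ℂ, DifferentiableOn ℂ g D ∧
      (∀ z ∈ D, (g z)^2 = z) ∧
      Set.MapsTo g D (Metric.ball (0:ℂ) 1) ∧
      ∀ z ∈ D, lam z = ‖deriv g z‖ / (1 - (‖g z‖)^2)) := by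
  obtain rfl : lam = fun z => sqrtPullbackDensity ‖z‖ := funext hlam
  have hΩ_norm : ∀ z ∈ Ω, 0 < ‖z‖ ∧ ‖z‖ < 1 := by
    rw [hΩ]
    rintro z ⟨h1, h2⟩
    constructor <;> linarith
  have hD_slit : ∀ z ∈ D, z ∈ slitPlane := by
    rw [hD]
    rintro z ⟨hzΩ, hz⟩
    exact mem_slitPlane_of_not_neg_real (norm_pos_iff.mp (hΩ_norm z hzΩ).1) hz
  have hD_norm : ∀ z ∈ D, ‖z‖ < 1 := fun z hz => (hΩ_norm z (hD ▸ hz).1).2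
  refine ⟨fun z hz => sqrtPullbackDensity_pos (hΩ_norm z hz).1 (hΩ_norm z hz).2,
    fun z hz => ?_, fun z hz => ?_,
    fun ξ hξ => (congrArg sqrtPullbackDensity hξ).trans sqrtPullbackDensity_one_fourth,
    fun ξ hξ => (congrArg sqrtPullbackDensity hξ).trans sqrtPullbackDensity_one_half,
    fun z => z ^ (2⁻¹ : ℂ),
    fun z hz => (hasDerivAt_cpow_inv_two (hD_slit z hz)).differentiableAt.differentiableWithinAt,
    fun z _ => cpow_inv_two_sq z, fun z hz => ?_, fun z hz => ?_⟩
  · obtain ⟨h0, h1⟩ := hΩ_norm z hz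
    exact ((contDiffAt_sqrtPullbackDensity h0 h1.ne).comp z
      (contDiffAt_norm ℝ (norm_pos_iff.mp h0))).contDiffWithinAt
  · obtain ⟨h0, h1⟩ := hΩ_norm z hz
    exact lap_log_sqrtPullbackDensity_norm (norm_pos_iff.mp h0) h1.ne
  · rw [mem_ball_zero_iff, ← pow_lt_one_iff_of_nonneg (norm_nonneg _) two_ne_zero, ← norm_pow,
      cpow_inv_two_sq]
    exact hD_norm z hz
  · rw [(hasDerivAt_cpow_inv_two (hD_slit z hz)).deriv, ← sqrtPullbackDensity_norm_sq,
      cpow_inv_two_sq]
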